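/- arXiv:2202.09576 — 2 statements merged into one kernel-verified Lean document; each statement's English description precedes it below -/
import Mathlib

section
/- Let α be a real number with 1 ≤ α < 2, set s = cos²(απ/2), and let A be a 3×3 real matrix whose characteristic polynomial is λ³ + a_1 λ² + a_2 λ + a_3. Then every complex eigenvalue λ of A satisfies |arg(λ)| > απ/2 if and only if the following three inequalities hold: (i) a_1 > 0; (ii) (4a_1a_3 - 4a_2²)s + a_1²a_2 - a_1a_3 > 0; (iii) a_3·(-64a_3²s³ + (16a_1a_2a_3 + 48a_3²)s² - (4a_1³a_3 - 4a_1a_2a_3 + 4a_2³ + 12a_3²)s + a_1²a_2² - 2a_1a_2a_3 + a_3²) > 0. -/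
open Polynomial Complex Matrix
open scoped Real

/-!
Put `θ = απ/2 ∈ [π/2, π)` and `s = cos² θ ∈ [0, 1)`; then `|arg z| > θ` iff `Re z < 0` and
`s |z|² < (Re z)²`. A real cubic has three real roots, or a real root `r` and a pair `x ± iy` with
`y ≠ 0`, and the conditions are analysed in terms of the roots. Then
`Δ₃ = a₃ ∏ ((u + v)² - 4 s u v)` over the pairs of roots `u, v`. A factor vanishes iff
`u / v = e^{± 2iθ}`; it is nonnegative when `u, v` are real, and for `u, v = x ± iy` it is
`4 ((Re z)² - s |z|²)`, the sector condition itself. So `Δ₃ > 0` forces `a₃ > 0` in the first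
case, and makes `-r` and the sector condition of `x ± iy` have the same sign in the second;
`Δ₂`, whose sign is controlled by sum-of-squares decompositions, rules out the remaining sign
patterns.
-/

theorem lt_abs_arg_iff {θ : ℝ} (hθ₁ : π / 2 ≤ θ) (hθ₂ : θ ≤ π) (z : ℂ) :
    θ < |z.arg| ↔ z.re < 0 ∧ Real.cos θ ^ 2 * (z.re ^ 2 + z.im ^ 2) < z.re ^ 2 := by
  rcases eq_or_ne z 0 with rfl | hz
  · simp only [arg_zero, abs_zero, zero_re, zero_im, lt_irrefl, false_and, iff_false, not_lt]
    linarith [Real.pi_pos]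
  have hcos : Real.cos θ ≤ 0 := Real.cos_nonpos_of_pi_div_two_le_of_le hθ₁ (by linarith)
  have hnorm : ‖z‖ ^ 2 = z.re ^ 2 + z.im ^ 2 := by rw [Complex.sq_norm, normSq_apply]; ring
  have hz' : 0 < ‖z‖ := norm_pos_iff.mpr hz
  have hcos_lt : θ < |z.arg| ↔ z.re < ‖z‖ * Real.cos θ := by
    rw [← Real.strictAntiOn_cos.lt_iff_gt ⟨abs_nonneg _, abs_arg_le_pi z⟩
      ⟨by linarith [Real.pi_pos], hθ₂⟩, Real.cos_abs, cos_arg hz, div_lt_iff₀' hz']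
  rw [hcos_lt, ← hnorm]
  constructor
  · intro h
    have : ‖z‖ * Real.cos θ ≤ 0 := mul_nonpos_of_nonneg_of_nonpos hz'.le hcos
    exact ⟨by linarith, by nlinarith⟩
  · rintro ⟨hre, hsq⟩
    nlinarith [mul_nonpos_of_nonneg_of_nonpos hz'.le hcos]

theorem lt_abs_arg_ofReal_iff {θ : ℝ} (hθ₀ : 0 ≤ θ) (hθ₁ : θ < π) (t : ℝ) :
    θ < |(t : ℂ).arg| ↔ t < 0 := by
  rcases lt_or_ge t 0 with ht | ht
  · simp [arg_ofReal_of_neg ht, abs_of_pos Real.pi_pos, ht, hθ₁]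
  · simp only [arg_ofReal_of_nonneg ht, abs_zero, not_lt.mpr ht, iff_false, not_lt, hθ₀]

theorem exists_cubic_root (b c d : ℝ) : ∃ r : ℝ, r ^ 3 + b * r ^ 2 + c * r + d = 0 := by
  set M := 1 + |b| + |c| + |d|
  have hb := abs_nonneg b
  have hc := abs_nonneg c
  have hd := abs_nonneg d
  have hM : 1 ≤ M := by simp only [M]; linarith
  have hcM := mul_le_mul_of_nonneg_right (neg_abs_le c) (by linarith : (0:ℝ) ≤ M)
  have hcM' := mul_le_mul_of_nonneg_right (le_abs_self c) (by linarith : (0:ℝ) ≤ M)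
  have hbM := mul_le_mul_of_nonneg_right (neg_abs_le b) (by positivity : (0:ℝ) ≤ M ^ 2)
  have hbM' := mul_le_mul_of_nonneg_right (le_abs_self b) (by positivity : (0:ℝ) ≤ M ^ 2)
  have hneg : (-M) ^ 3 + b * (-M) ^ 2 + c * (-M) + d ≤ 0 := by
    nlinarith [neg_abs_le d, le_abs_self d]
  have hpos : 0 ≤ M ^ 3 + b * M ^ 2 + c * M + d := by
    nlinarith [neg_abs_le d, le_abs_self d]
  exact intermediate_value_univ (-M) M (by fun_prop) ⟨hneg, hpos⟩

theorem real_roots_or_conj_roots (a1 a2 a3 : ℝ) :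
    (∃ p q t : ℝ, a1 = -(p + q + t) ∧ a2 = p * q + p * t + q * t ∧ a3 = -(p * q * t)) ∨
    ∃ r x y : ℝ, 0 < y ∧ a1 = -(r + 2 * x) ∧ a2 = 2 * r * x + (x ^ 2 + y ^ 2) ∧
      a3 = -(r * (x ^ 2 + y ^ 2)) := by
  obtain ⟨r, hr⟩ := exists_cubic_root a1 a2 a3
  set b := a1 + r
  set c := a2 + a1 * r + r ^ 2
  rcases le_or_gt (4 * c) (b ^ 2) with hΔ | hΔ
  · left
    have hd := Real.sq_sqrt (sub_nonneg.mpr hΔ)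
    refine ⟨r, (-b + √(b ^ 2 - 4 * c)) / 2, (-b - √(b ^ 2 - 4 * c)) / 2, ?_, ?_, ?_⟩
    · ring
    · linear_combination hd / 4
    · linear_combination hr - r / 4 * hd
  · right
    have hd := Real.sq_sqrt (sub_nonneg.mpr hΔ.le)
    refine ⟨r, -b / 2, √(4 * c - b ^ 2) / 2, by positivity, ?_, ?_, ?_⟩
    · ring
    · linear_combination -hd / 4
    · linear_combination hr + r / 4 * hd

theorem isRoot_map_cubic_iff {a1 a2 a3 : ℝ} {u v w : ℂ} (h1 : (a1 : ℂ) = -(u + v + w))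
    (h2 : (a2 : ℂ) = u * v + u * w + v * w) (h3 : (a3 : ℂ) = -(u * v * w)) (z : ℂ) :
    ((X ^ 3 + C a1 * X ^ 2 + C a2 * X + C a3).map (algebraMap ℝ ℂ)).IsRoot z ↔
      z = u ∨ z = v ∨ z = w := by
  have : ((X ^ 3 + C a1 * X ^ 2 + C a2 * X + C a3).map (algebraMap ℝ ℂ)).eval z =
      (z - u) * (z - v) * (z - w) := by
    simp only [Polynomial.map_add, Polynomial.map_mul, Polynomial.map_pow, map_X, map_C,
      eval_add, eval_mul, eval_pow, eval_X, eval_C, coe_algebraMap]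
    linear_combination z ^ 2 * h1 + z * h2 + h3
  rw [IsRoot.def, this, mul_eq_zero, mul_eq_zero, sub_eq_zero, sub_eq_zero, sub_eq_zero, or_assoc]

theorem cos_sq_lt_one {θ : ℝ} (hθ₀ : 0 < θ) (hθ₁ : θ < π) : Real.cos θ ^ 2 < 1 := by
  rw [Real.cos_sq']
  linarith [pow_pos (Real.sin_pos_of_pos_of_lt_pi hθ₀ hθ₁) 2]

-- At `s = 0`, `delta2` and `delta3` are `a₁ Δ` and `a₃ Δ²` for the Hurwitz determinant
-- `Δ = a₁ a₂ - a₃`.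
def delta2 (s a1 a2 a3 : ℝ) : ℝ := (4 * a1 * a3 - 4 * a2 ^ 2) * s + a1 ^ 2 * a2 - a1 * a3

def delta3 (s a1 a2 a3 : ℝ) : ℝ :=
  a3 * (-(64 * a3 ^ 2 * s ^ 3) + (16 * a1 * a2 * a3 + 48 * a3 ^ 2) * s ^ 2
    - (4 * a1 ^ 3 * a3 - 4 * a1 * a2 * a3 + 4 * a2 ^ 3 + 12 * a3 ^ 2) * s
    + a1 ^ 2 * a2 ^ 2 - 2 * a1 * a2 * a3 + a3 ^ 2)

def pairForm (s u v : ℝ) : ℝ := (u + v) ^ 2 - 4 * s * (u * v)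

section RealRoots

variable {s : ℝ}

theorem pairForm_nonneg (hs₀ : 0 ≤ s) (hs₁ : s ≤ 1) (u v : ℝ) : 0 ≤ pairForm s u v := by
  have : pairForm s u v = (1 - s) * (u + v) ^ 2 + s * (u - v) ^ 2 := by unfold pairForm; ring
  rw [this]
  have := sub_nonneg.mpr hs₁
  positivity

theorem pairForm_pos (hs : s < 1) {u v : ℝ} (huv : 0 < u * v) : 0 < pairForm s u v := by
  have : pairForm s u v = (u - v) ^ 2 + 4 * (1 - s) * (u * v) := by unfold pairForm; ring
  rw [this]
  have := sub_pos.mpr hs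
  positivity

variable (s) (p q t : ℝ)

theorem delta2_vieta : delta2 s (-(p + q + t)) (p * q + p * t + q * t) (-(p * q * t)) =
    (p + q + t) * (p + q) * (p + t) * (q + t)
      - 4 * s * ((p * q) ^ 2 + (p * t) ^ 2 + (q * t) ^ 2 + p * q * t * (p + q + t)) := by
  unfold delta2; ring

theorem delta3_vieta : delta3 s (-(p + q + t)) (p * q + p * t + q * t) (-(p * q * t)) =
    -(p * q * t) * (pairForm s p q * pairForm s p t * pairForm s q t) := by
  unfold delta3 pairForm; ring

variable {s p q t}

theorem delta2_vieta_pos (hs₀ : 0 ≤ s) (hs₁ : s < 1) (hp : p < 0) (hq : q < 0) (ht : t < 0) :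
    0 < delta2 s (-(p + q + t)) (p * q + p * t + q * t) (-(p * q * t)) := by
  have hsplit : delta2 s (-(p + q + t)) (p * q + p * t + q * t) (-(p * q * t)) =
      (1 - s) * ((-(p + q + t)) * ((-(p + q)) * ((p + t) * (q + t))))
        + s * (p * q * (p - q) ^ 2 + p * t * (p - t) ^ 2 + q * t * (q - t) ^ 2) := by
    unfold delta2; ring
  have := mul_pos_of_neg_of_neg hp hq
  have := mul_pos_of_neg_of_neg hp ht
  have := mul_pos_of_neg_of_neg hq ht
  have := mul_pos_of_neg_of_neg (add_neg hp ht) (add_neg hq ht)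
  have := sub_pos.mpr hs₁
  have : 0 < -(p + q + t) := by linarith
  have : 0 < -(p + q) := by linarith
  rw [hsplit]
  positivity

theorem delta2_vieta_neg (hs₀ : 0 ≤ s) (hp : 0 < p) (hq : 0 < q) (ht : t < 0)
    (hsum : p + q + t < 0) :
    delta2 s (-(p + q + t)) (p * q + p * t + q * t) (-(p * q * t)) < 0 := by
  have hpqt : 0 < p * q * t * (p + q + t) :=
    mul_pos_of_neg_of_neg (mul_neg_of_pos_of_neg (mul_pos hp hq) ht) hsum
  have h1 : 0 < -(p + q + t) * (p + q) * (-(p + t)) * (-(q + t)) := by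
    have : 0 < -(p + t) := by linarith
    have : 0 < -(q + t) := by linarith
    have : 0 < -(p + q + t) := by linarith
    positivity
  rw [delta2_vieta]
  nlinarith [mul_nonneg hs₀ (by positivity : 0 ≤ (p * q) ^ 2 + (p * t) ^ 2 + (q * t) ^ 2)]

theorem neg_of_delta_pos (hs₀ : 0 ≤ s) (hs₁ : s < 1) (h1 : 0 < -(p + q + t))
    (h2 : 0 < delta2 s (-(p + q + t)) (p * q + p * t + q * t) (-(p * q * t)))
    (h3 : 0 < delta3 s (-(p + q + t)) (p * q + p * t + q * t) (-(p * q * t))) : p < 0 := by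
  have hprod : p * q * t < 0 := by
    rw [delta3_vieta] at h3
    have := mul_nonneg (mul_nonneg (pairForm_nonneg hs₀ hs₁.le p q)
      (pairForm_nonneg hs₀ hs₁.le p t)) (pairForm_nonneg hs₀ hs₁.le q t)
    exact neg_pos.mp (pos_of_mul_pos_left h3 this)
  by_contra! hp
  have hp : 0 < p := lt_of_le_of_ne hp (by rintro rfl; simp at hprod)
  have hqt : q * t < 0 := by nlinarith
  rcases mul_neg_iff.mp hqt with ⟨hq, ht⟩ | ⟨hq, ht⟩
  · exact lt_asymm (delta2_vieta_neg hs₀ hp hq ht (by linarith)) h2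
  · exact lt_asymm (delta2_vieta_neg hs₀ hp ht hq (by linarith))
      (h2.trans_eq (by unfold delta2; ring))

theorem real_roots_stable_iff (hs₀ : 0 ≤ s) (hs₁ : s < 1) :
    (p < 0 ∧ q < 0 ∧ t < 0) ↔
      0 < -(p + q + t) ∧
      0 < delta2 s (-(p + q + t)) (p * q + p * t + q * t) (-(p * q * t)) ∧
      0 < delta3 s (-(p + q + t)) (p * q + p * t + q * t) (-(p * q * t)) := by
  constructor
  · rintro ⟨hp, hq, ht⟩
    refine ⟨by linarith, delta2_vieta_pos hs₀ hs₁ hp hq ht, ?_⟩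
    rw [delta3_vieta]
    have := mul_neg_of_pos_of_neg (mul_pos_of_neg_of_neg hp hq) ht
    have := pairForm_pos hs₁ (mul_pos_of_neg_of_neg hp hq)
    have := pairForm_pos hs₁ (mul_pos_of_neg_of_neg hp ht)
    have := pairForm_pos hs₁ (mul_pos_of_neg_of_neg hq ht)
    have : 0 < -(p * q * t) := by linarith
    positivity
  · rintro ⟨h1, h2, h3⟩
    refine ⟨neg_of_delta_pos hs₀ hs₁ h1 h2 h3,
      neg_of_delta_pos (q := p) (t := t) hs₀ hs₁ (by linarith)
        (h2.trans_eq (by unfold delta2; ring)) (h3.trans_eq (by unfold delta3; ring)),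
      neg_of_delta_pos (q := q) (t := p) hs₀ hs₁ (by linarith)
        (h2.trans_eq (by unfold delta2; ring)) (h3.trans_eq (by unfold delta3; ring))⟩

end RealRoots

section ConjugateRoots

variable (s r x y : ℝ)

theorem delta2_conj_eq :
    delta2 s (-(r + 2 * x)) (2 * r * x + (x ^ 2 + y ^ 2)) (-(r * (x ^ 2 + y ^ 2))) =
      2 * x * (r + 2 * x) * ((r + x) ^ 2 + y ^ 2)
        - 4 * s * ((x ^ 2 + y ^ 2) ^ 2 + 2 * r * x * (x ^ 2 + y ^ 2)
          + r ^ 2 * (3 * x ^ 2 - y ^ 2)) := by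
  unfold delta2; ring

theorem delta2_conj_mul_eq :
    delta2 s (-(r + 2 * x)) (2 * r * x + (x ^ 2 + y ^ 2)) (-(r * (x ^ 2 + y ^ 2)))
        * (x ^ 2 + y ^ 2) =
      2 * r * x * ((y ^ 2 + r * x - x ^ 2) ^ 2 + (y * (r + 2 * x)) ^ 2)
        + 4 * ((x ^ 2 + y ^ 2) ^ 2 + 2 * r * x * (x ^ 2 + y ^ 2) + r ^ 2 * (3 * x ^ 2 - y ^ 2))
          * (x ^ 2 - s * (x ^ 2 + y ^ 2)) := by
  unfold delta2; ring

/-- The last factor is `|(r + z)² - 4 s r z|²` for `z = x + i y`. -/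
theorem delta3_conj_eq :
    delta3 s (-(r + 2 * x)) (2 * r * x + (x ^ 2 + y ^ 2)) (-(r * (x ^ 2 + y ^ 2))) =
      4 * (-r) * (x ^ 2 + y ^ 2) * (x ^ 2 - s * (x ^ 2 + y ^ 2))
        * (((r + x) ^ 2 - y ^ 2 - 4 * s * r * x) ^ 2 + (2 * y * (r + x) - 4 * s * r * y) ^ 2) := by
  unfold delta3; ring

variable {s r x y}

theorem pairForm_normSq_pos (hs : s < 1) (hy : y ≠ 0) (hr : r < 0) (hx : x < 0)
    (hU : s * (x ^ 2 + y ^ 2) < x ^ 2) :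
    0 < ((r + x) ^ 2 - y ^ 2 - 4 * s * r * x) ^ 2 + (2 * y * (r + x) - 4 * s * r * y) ^ 2 := by
  by_contra! h
  have hre : (r + x) ^ 2 - y ^ 2 - 4 * s * r * x = 0 := by nlinarith
  have him : 2 * y * (r + x - 2 * s * r) = 0 := by nlinarith
  have hx' : x = r * (2 * s - 1) := by
    have := (mul_eq_zero.mp him).resolve_left (mul_ne_zero two_ne_zero hy)
    linarith
  have hy' : y ^ 2 = 4 * s * (1 - s) * r ^ 2 := by rw [hx'] at hre; linarith
  have hU' : 0 < (1 - s) * r ^ 2 * (1 - 4 * s) := by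
    rw [hx', hy'] at hU; linarith
  have hs4 : s < 1 / 4 := by
    have := pos_of_mul_pos_right hU' (by have := sub_pos.mpr hs; positivity)
    linarith
  nlinarith

theorem delta2_conj_pos_iff (hs₀ : 0 ≤ s) (hy : y ≠ 0) (hr : r < 0) (ha : r + 2 * x < 0)
    (hU : s * (x ^ 2 + y ^ 2) < x ^ 2) :
    0 < delta2 s (-(r + 2 * x)) (2 * r * x + (x ^ 2 + y ^ 2)) (-(r * (x ^ 2 + y ^ 2))) ↔
      x < 0 := by
  have hm : 0 < x ^ 2 + y ^ 2 := by positivity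
  have hN : 0 < (r + x) ^ 2 + y ^ 2 := by positivity
  have hW : 0 ≤ (y ^ 2 + r * x - x ^ 2) ^ 2 + (y * (r + 2 * x)) ^ 2 := by positivity
  have hA := delta2_conj_eq s r x y
  have hB := delta2_conj_mul_eq s r x y
  set K := (x ^ 2 + y ^ 2) ^ 2 + 2 * r * x * (x ^ 2 + y ^ 2) + r ^ 2 * (3 * x ^ 2 - y ^ 2)
  set E := delta2 s (-(r + 2 * x)) (2 * r * x + (x ^ 2 + y ^ 2)) (-(r * (x ^ 2 + y ^ 2)))
  have hx₀ : x ≠ 0 := by rintro rfl; nlinarith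
  constructor
  · intro hE
    by_contra! hx
    have hx : 0 < x := lt_of_le_of_ne hx hx₀.symm
    rcases le_or_gt K 0 with hK | hK
    · nlinarith [mul_pos hE hm, mul_nonneg (mul_pos (neg_pos.mpr hr) hx).le hW,
        mul_nonpos_of_nonpos_of_nonneg hK (sub_pos.mpr hU).le]
    · nlinarith [mul_pos (mul_pos hx (neg_pos.mpr ha)) hN, mul_nonneg hs₀ hK.le]
  · intro hx
    rcases le_or_gt K 0 with hK | hK
    · nlinarith [mul_pos (mul_pos_of_neg_of_neg hx ha) hN, mul_nonpos_of_nonneg_of_nonpos hs₀ hK]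
    · have : 0 < E * (x ^ 2 + y ^ 2) := by
        rw [hB]
        nlinarith [mul_nonneg (mul_pos_of_neg_of_neg hr hx).le hW, mul_pos hK (sub_pos.mpr hU)]
      exact pos_of_mul_pos_left this hm.le

theorem delta2_conj_nonpos (hr : 0 < r) (ha : r + 2 * x < 0)
    (hU : x ^ 2 < s * (x ^ 2 + y ^ 2)) :
    delta2 s (-(r + 2 * x)) (2 * r * x + (x ^ 2 + y ^ 2)) (-(r * (x ^ 2 + y ^ 2))) ≤ 0 := by
  have hx : x < 0 := by linarith
  have hm : 0 < x ^ 2 + y ^ 2 := by have := hx.ne; positivity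
  have hW : 0 ≤ (y ^ 2 + r * x - x ^ 2) ^ 2 + (y * (r + 2 * x)) ^ 2 := by positivity
  have hK :
      0 ≤ (x ^ 2 + y ^ 2) ^ 2 + 2 * r * x * (x ^ 2 + y ^ 2) + r ^ 2 * (3 * x ^ 2 - y ^ 2) := by
    set c := -(r + 2 * x) / 2 with hc
    have hc₀ : 0 < c := by linarith
    have : (x ^ 2 + y ^ 2) ^ 2 + 2 * r * x * (x ^ 2 + y ^ 2) + r ^ 2 * (3 * x ^ 2 - y ^ 2) =
        (y ^ 2 - 3 / 4 * r ^ 2) ^ 2 + c ^ 4 + 2 * y ^ 2 * c ^ 2 + 3 / 2 * r ^ 2 * c ^ 2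
          + 2 * r ^ 3 * c := by
      rw [hc]; ring
    rw [this]
    positivity
  have := delta2_conj_mul_eq s r x y
  refine nonpos_of_mul_nonpos_left ?_ hm
  nlinarith [mul_nonpos_of_nonpos_of_nonneg (mul_neg_of_pos_of_neg hr hx).le hW,
    mul_nonpos_of_nonneg_of_nonpos hK (sub_neg.mpr hU).le]

theorem conj_roots_stable_iff (hs₀ : 0 ≤ s) (hs₁ : s < 1) (hy : y ≠ 0) :
    (r < 0 ∧ x < 0 ∧ s * (x ^ 2 + y ^ 2) < x ^ 2) ↔
      0 < -(r + 2 * x) ∧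
      0 < delta2 s (-(r + 2 * x)) (2 * r * x + (x ^ 2 + y ^ 2)) (-(r * (x ^ 2 + y ^ 2))) ∧
      0 < delta3 s (-(r + 2 * x)) (2 * r * x + (x ^ 2 + y ^ 2)) (-(r * (x ^ 2 + y ^ 2))) := by
  have hm : 0 < x ^ 2 + y ^ 2 := by positivity
  rw [delta3_conj_eq]
  constructor
  · rintro ⟨hr, hx, hU⟩
    refine ⟨by linarith, (delta2_conj_pos_iff hs₀ hy hr (by linarith) hU).mpr hx, ?_⟩
    exact mul_pos (mul_pos (mul_pos (by linarith) hm) (sub_pos.mpr hU))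
      (pairForm_normSq_pos hs₁ hy hr hx hU)
  · rintro ⟨ha, h2, h3⟩
    have hrU : 0 < -r * (x ^ 2 - s * (x ^ 2 + y ^ 2)) := by
      refine pos_of_mul_pos_left (b := 4 * (x ^ 2 + y ^ 2) *
        (((r + x) ^ 2 - y ^ 2 - 4 * s * r * x) ^ 2 + (2 * y * (r + x) - 4 * s * r * y) ^ 2))
        (h3.trans_eq (by ring)) (by positivity)
    rcases mul_pos_iff.mp hrU with ⟨hr, hU⟩ | ⟨hr, hU⟩
    · have hr : r < 0 := neg_pos.mp hr
      have hU : s * (x ^ 2 + y ^ 2) < x ^ 2 := sub_pos.mp hU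
      exact ⟨hr, (delta2_conj_pos_iff hs₀ hy hr (by linarith) hU).mp h2, hU⟩
    · exact absurd h2 (delta2_conj_nonpos (neg_neg_iff_pos.mp hr) (by linarith)
        (sub_neg.mp hU)).not_gt

end ConjugateRoots

theorem sector_iff_of_real_roots {θ s : ℝ} (hθ₀ : 0 < θ) (hθ₁ : θ < π)
    (hs : s = Real.cos θ ^ 2) (p q t : ℝ) :
    (∀ z : ℂ, ((X ^ 3 + C (-(p + q + t)) * X ^ 2 + C (p * q + p * t + q * t) * X
        + C (-(p * q * t))).map (algebraMap ℝ ℂ)).IsRoot z → θ < |z.arg|) ↔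
      0 < -(p + q + t) ∧
      0 < delta2 s (-(p + q + t)) (p * q + p * t + q * t) (-(p * q * t)) ∧
      0 < delta3 s (-(p + q + t)) (p * q + p * t + q * t) (-(p * q * t)) := by
  have hroots := isRoot_map_cubic_iff (a1 := -(p + q + t)) (a2 := p * q + p * t + q * t)
    (a3 := -(p * q * t)) (u := p) (v := q) (w := t) (by push_cast; ring) (by push_cast; ring)
    (by push_cast; ring)
  simp only [hroots, forall_eq_or_imp, forall_eq, lt_abs_arg_ofReal_iff hθ₀.le hθ₁]
  exact real_roots_stable_iff (hs ▸ sq_nonneg _) (hs ▸ cos_sq_lt_one hθ₀ hθ₁)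

theorem sector_iff_of_conj_roots {θ s r x y : ℝ} (hθ₀ : π / 2 ≤ θ) (hθ₁ : θ < π)
    (hs : s = Real.cos θ ^ 2) (hy : y ≠ 0) :
    (∀ z : ℂ, ((X ^ 3 + C (-(r + 2 * x)) * X ^ 2 + C (2 * r * x + (x ^ 2 + y ^ 2)) * X
        + C (-(r * (x ^ 2 + y ^ 2)))).map (algebraMap ℝ ℂ)).IsRoot z → θ < |z.arg|) ↔
      0 < -(r + 2 * x) ∧
      0 < delta2 s (-(r + 2 * x)) (2 * r * x + (x ^ 2 + y ^ 2)) (-(r * (x ^ 2 + y ^ 2))) ∧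
      0 < delta3 s (-(r + 2 * x)) (2 * r * x + (x ^ 2 + y ^ 2)) (-(r * (x ^ 2 + y ^ 2))) := by
  have hθ₀' : 0 < θ := by linarith [Real.pi_pos]
  have hs₀ : 0 ≤ s := hs ▸ sq_nonneg _
  have hs₁ : s < 1 := hs ▸ cos_sq_lt_one hθ₀' hθ₁
  have hroots := isRoot_map_cubic_iff (a1 := -(r + 2 * x)) (a2 := 2 * r * x + (x ^ 2 + y ^ 2))
    (a3 := -(r * (x ^ 2 + y ^ 2))) (u := r) (v := x + y * I) (w := x - y * I)
    (by push_cast; ring) (by push_cast; linear_combination (y ^ 2 : ℂ) * I_sq)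
    (by push_cast; linear_combination (-r * y ^ 2 : ℂ) * I_sq)
  simp only [hroots, forall_eq_or_imp, forall_eq, lt_abs_arg_ofReal_iff hθ₀'.le hθ₁,
    lt_abs_arg_iff hθ₀ hθ₁.le (x + y * I), lt_abs_arg_iff hθ₀ hθ₁.le (x - y * I), ← hs]
  refine Iff.trans ?_ (conj_roots_stable_iff hs₀ hs₁ hy)
  simp

/-- Stability criterion for 3-dimensional fractional-order systems with
`1 ≤ α < 2` and `s = cos²(απ/2)`. -/
theorem frac_stability_dim3 (α : ℝ) (hα1 : 1 ≤ α) (hα2 : α < 2)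
    (s : ℝ) (hs : s = Real.cos (α * Real.pi / 2) ^ 2)
    (a1 a2 a3 : ℝ) (A : Matrix (Fin 3) (Fin 3) ℝ)
    (hchar : A.charpoly = X ^ 3 + C a1 * X ^ 2 + C a2 * X + C a3) :
    (∀ z : ℂ, (A.charpoly.map (algebraMap ℝ ℂ)).IsRoot z → α * Real.pi / 2 < |z.arg|) ↔
      (0 < a1 ∧
        0 < (4 * a1 * a3 - 4 * a2 ^ 2) * s + a1 ^ 2 * a2 - a1 * a3 ∧
        0 < a3 * (-(64 * a3 ^ 2 * s ^ 3) + (16 * a1 * a2 * a3 + 48 * a3 ^ 2) * s ^ 2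
              - (4 * a1 ^ 3 * a3 - 4 * a1 * a2 * a3 + 4 * a2 ^ 3 + 12 * a3 ^ 2) * s
              + a1 ^ 2 * a2 ^ 2 - 2 * a1 * a2 * a3 + a3 ^ 2)) := by
  have hθ₀ : π / 2 ≤ α * π / 2 := by nlinarith [Real.pi_pos]
  have hθ₁ : α * π / 2 < π := by nlinarith [Real.pi_pos]
  rw [hchar]
  rcases real_roots_or_conj_roots a1 a2 a3 with
    ⟨p, q, t, rfl, rfl, rfl⟩ | ⟨r, x, y, hy, rfl, rfl, rfl⟩
  · exact sector_iff_of_real_roots (by linarith [Real.pi_pos]) hθ₁ hs p q t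
  · exact sector_iff_of_conj_roots hθ₀ hθ₁ hs hy.ne'
end

section
/- Let α be a real number with 1 ≤ α < 2 and let A be a 2×2 real matrix with entries a_11, a_12, a_21, a_22. Then every complex eigenvalue λ of A satisfies |arg(λ)| > απ/2 if and only if -(a_11 + a_22) > 0 and (a_11a_22 - a_12a_21)·((a_11 + a_22)² - 4(a_11a_22 - a_12a_21)·cos²(απ/2)) > 0. -/
/-!
The eigenvalues are the roots of `z ^ 2 - T z + D` with `T` the trace and `D` the
determinant, and `θ = απ/2` lies in `[π/2, π)`. If the discriminant is nonnegative the roots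
are real, `θ < |arg r|` just says `r < 0`, and both roots are negative iff `T < 0 < D`.
Otherwise the roots are a conjugate pair with real part `T / 2` and modulus `√D`; as `cos` is
decreasing on `[0, π]`, `θ < |arg z|` says `T / 2 < √D cos θ ≤ 0`, i.e. `T < 0` and
`4 D cos² θ < T ^ 2`. Given the sign of the discriminant, the condition on `D` is in either
case equivalent to `0 < D (T ^ 2 - 4 D cos² θ)`.
-/

open Polynomial Complex Matrix
open scoped Real ComplexConjugate

namespace Complex

theorem lt_abs_arg_iff {θ : ℝ} (hθ0 : 0 ≤ θ) (hθπ : θ ≤ π) (z : ℂ) :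
    θ < |z.arg| ↔ z.re < ‖z‖ * Real.cos θ := by
  rcases eq_or_ne z 0 with rfl | hz
  · simp [hθ0.not_gt]
  rw [← Real.strictAntiOn_cos.lt_iff_gt ⟨abs_nonneg _, abs_arg_le_pi z⟩ ⟨hθ0, hθπ⟩,
    Real.cos_abs, cos_arg hz, div_lt_iff₀ (norm_pos_iff.mpr hz), mul_comm]

theorem lt_abs_arg_ofReal_iff {θ : ℝ} (hθ0 : 0 < θ) (hθπ : θ < π) (r : ℝ) :
    θ < |arg (r : ℂ)| ↔ r < 0 := by
  rcases lt_or_ge r 0 with hr | hr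
  · simp [arg_ofReal_of_neg hr, abs_of_pos Real.pi_pos, hθπ, hr]
  · simp [arg_ofReal_of_nonneg hr, hr.not_gt, hθ0.not_gt]

end Complex

theorem quadratic_eq_zero_iff_of_discrim_nonneg {T D : ℝ} (h : 4 * D ≤ T ^ 2) (z : ℂ) :
    z ^ 2 - T * z + D = 0 ↔
      z = ((T + √(T ^ 2 - 4 * D)) / 2 : ℝ) ∨ z = ((T - √(T ^ 2 - 4 * D)) / 2 : ℝ) := by
  have hs : ((√(T ^ 2 - 4 * D) : ℝ) : ℂ) ^ 2 = T ^ 2 - 4 * D := by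
    norm_cast; exact Real.sq_sqrt (by linarith)
  convert quadratic_eq_zero_iff (a := 1) (b := -(T : ℂ)) (c := D) one_ne_zero
    (s := (√(T ^ 2 - 4 * D) : ℂ)) (by rw [discrim, ← sq, hs]; ring) z using 2 <;>
    push_cast <;> ring_nf

theorem quadratic_eq_zero_iff_of_discrim_neg {T D : ℝ} (h : T ^ 2 < 4 * D) (z : ℂ) :
    z ^ 2 - T * z + D = 0 ↔
      z = T / 2 + √(4 * D - T ^ 2) / 2 * I ∨ z = conj (T / 2 + √(4 * D - T ^ 2) / 2 * I) := by
  have hs : ((√(4 * D - T ^ 2) : ℝ) : ℂ) ^ 2 = 4 * D - T ^ 2 := by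
    norm_cast; exact Real.sq_sqrt (by linarith)
  convert quadratic_eq_zero_iff (a := 1) (b := -(T : ℂ)) (c := D) one_ne_zero
    (s := √(4 * D - T ^ 2) * I)
    (by rw [discrim, mul_mul_mul_comm, ← sq, ← sq, hs, I_sq]; ring) z using 3
  · ring
  · ring
  · simp only [map_add, map_mul, map_div₀, conj_ofReal, conj_I, map_ofNat]
    ring

theorem forall_quadratic_root_lt_abs_arg_iff_of_discrim_nonneg {θ T D : ℝ} (hθ0 : 0 < θ)
    (hθπ : θ < π) (h : 4 * D ≤ T ^ 2) :
    (∀ z : ℂ, z ^ 2 - T * z + D = 0 → θ < |z.arg|) ↔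
      0 < -T ∧ 0 < D * (T ^ 2 - 4 * D * Real.cos θ ^ 2) := by
  simp only [quadratic_eq_zero_iff_of_discrim_nonneg h, forall_eq_or_imp, forall_eq,
    lt_abs_arg_ofReal_iff hθ0 hθπ]
  set s := √(T ^ 2 - 4 * D)
  have hs0 : 0 ≤ s := Real.sqrt_nonneg _
  have hs2 : s ^ 2 = T ^ 2 - 4 * D := Real.sq_sqrt (by linarith)
  have hcos : Real.cos θ ^ 2 < 1 := by
    nlinarith [Real.sin_sq_add_cos_sq θ, Real.sin_pos_of_pos_of_lt_pi hθ0 hθπ]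
  constructor
  · rintro ⟨h₁, -⟩
    have hD : 0 < D := by nlinarith
    exact ⟨by linarith, mul_pos hD (by nlinarith)⟩
  · rintro ⟨hT, hpos⟩
    have hD : 0 < D := by
      by_contra! hD
      nlinarith [mul_nonpos_of_nonpos_of_nonneg hD
        (show 0 ≤ T ^ 2 - 4 * D * Real.cos θ ^ 2 by nlinarith [sq_nonneg (Real.cos θ)])]
    have : s < -T := by nlinarith
    constructor <;> linarith

theorem forall_quadratic_root_lt_abs_arg_iff_of_discrim_neg {θ T D : ℝ} (hθ : π / 2 ≤ θ)
    (hθπ : θ ≤ π) (h : T ^ 2 < 4 * D) :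
    (∀ z : ℂ, z ^ 2 - T * z + D = 0 → θ < |z.arg|) ↔
      0 < -T ∧ 0 < D * (T ^ 2 - 4 * D * Real.cos θ ^ 2) := by
  have hθ0 : 0 ≤ θ := by linarith [Real.pi_pos]
  have hD : 0 < D := by nlinarith
  have hnorm : ‖(T / 2 + √(4 * D - T ^ 2) / 2 * I : ℂ)‖ = √D := by
    rw [← ofReal_ofNat, ← ofReal_div, ← ofReal_div, norm_add_mul_I, div_pow, div_pow,
      Real.sq_sqrt (by linarith)]
    ring_nf
  have hre : (T / 2 + √(4 * D - T ^ 2) / 2 * I : ℂ).re = T / 2 := by simp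
  simp only [quadratic_eq_zero_iff_of_discrim_neg h, forall_eq_or_imp, forall_eq,
    lt_abs_arg_iff hθ0 hθπ, conj_re, norm_conj, and_self, hnorm, hre, mul_pos_iff_of_pos_left hD]
  have hu : √D * Real.cos θ ≤ 0 := mul_nonpos_of_nonneg_of_nonpos (Real.sqrt_nonneg D)
    (Real.cos_nonpos_of_pi_div_two_le_of_le hθ (by linarith))
  have hu2 : (√D * Real.cos θ) ^ 2 = D * Real.cos θ ^ 2 := by rw [mul_pow, Real.sq_sqrt hD.le]
  constructor
  · intro hlt
    exact ⟨by linarith, by nlinarith⟩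
  · rintro ⟨hT, hpos⟩
    by_contra! hle
    nlinarith

theorem forall_quadratic_root_lt_abs_arg_iff {θ : ℝ} (hθ : π / 2 ≤ θ) (hθπ : θ < π)
    (T D : ℝ) :
    (∀ z : ℂ, z ^ 2 - T * z + D = 0 → θ < |z.arg|) ↔
      0 < -T ∧ 0 < D * (T ^ 2 - 4 * D * Real.cos θ ^ 2) := by
  rcases le_or_gt (4 * D) (T ^ 2) with h | h
  · exact forall_quadratic_root_lt_abs_arg_iff_of_discrim_nonneg
      (by linarith [Real.pi_pos]) hθπ h
  · exact forall_quadratic_root_lt_abs_arg_iff_of_discrim_neg hθ hθπ.le h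

theorem Matrix.isRoot_map_charpoly_fin_two_iff {R S : Type*} [CommRing R] [Nontrivial R]
    [CommRing S] [Algebra R S] (A : Matrix (Fin 2) (Fin 2) R) (z : S) :
    (A.charpoly.map (algebraMap R S)).IsRoot z ↔
      z ^ 2 - algebraMap R S A.trace * z + algebraMap R S A.det = 0 := by
  simp [charpoly_fin_two]

/-- Stability criterion for a general 2×2 fractional-order system with `1 ≤ α < 2`,
expressed directly in terms of the entries of the system matrix. -/
theorem frac_stability_dim2_entries (α : ℝ) (hα1 : 1 ≤ α) (hα2 : α < 2)
    (a11 a12 a21 a22 : ℝ)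
    (A : Matrix (Fin 2) (Fin 2) ℝ) (hA : A = !![a11, a12; a21, a22]) :
    (∀ z : ℂ, (A.charpoly.map (algebraMap ℝ ℂ)).IsRoot z → α * Real.pi / 2 < |z.arg|) ↔
      (0 < -(a11 + a22) ∧
        0 < (a11 * a22 - a12 * a21) *
          ((a11 + a22) ^ 2
            - 4 * (a11 * a22 - a12 * a21) * Real.cos (α * Real.pi / 2) ^ 2)) := by
  have hθ : π / 2 ≤ α * π / 2 := by nlinarith [Real.pi_pos]
  have hθπ : α * π / 2 < π := by nlinarith [Real.pi_pos]
  subst hA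
  simp only [isRoot_map_charpoly_fin_two_iff, Complex.coe_algebraMap, trace_fin_two_of,
    det_fin_two_of]
  exact forall_quadratic_root_lt_abs_arg_iff hθ hθπ _ _
end
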